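/- arXiv:1012.4051 — 2 statements merged into one kernel-verified Lean document; each statement's English description precedes it below -/
import Mathlib

section
/- (Mirror descent regret, convex case) Under the mirror descent update w_{t+1} = argmin_{w∈W}[η⟨∂f_t(w_t),w⟩ + B_ψ(w,w_t) + η r(w)] with ψ α-strongly convex w.r.t. ‖·‖, each f_t convex with subgradients bounded by G in dual norm, r convex, and step size η = √(2α B_ψ(w*,w₁))/(G√T), the regret satisfies Σ_{t=1}^T [f_t(w_t)+r(w_t) − f_t(w*) − r(w*)] ≤ √(2T·B_ψ(w*,w₁))·G/√α. -/
/-!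
The first-order optimality condition of the update, combined with the three-point identity for
Bregman divergences, gives for each step
`η (⟪g_t, w_t - w*⟫ + r w_{t+1} - r w*) ≤ B(w*, w_t) - B(w*, w_{t+1}) + η² G² / (2α)`,
where the strong-convexity term `B(w_{t+1}, w_t) ≥ α/2 ‖w_{t+1} - w_t‖²` absorbs the movement
`⟪g_t, w_t - w_{t+1}⟫ ≤ G ‖w_t - w_{t+1}‖` by AM–GM. Summing telescopes the divergences; the
subgradient inequality linearises the losses, and `r w_0 ≤ r w_T` shifts the index of the
regulariser. The chosen `η` balances `T η G² / (2α)` against `B(w*, w_0) / η`.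
-/

open RealInnerProductSpace Set Finset

theorem IsMinOn.sub_le_of_hasFDerivAt_of_convexOn {E : Type*} [NormedAddCommGroup E]
    [NormedSpace ℝ E] {φ h : E → ℝ} {φ' : E →L[ℝ] ℝ} {W : Set E} {x u : E}
    (hmin : IsMinOn (φ + h) W x) (hW : Convex ℝ W) (hx : x ∈ W) (hu : u ∈ W)
    (hφ : HasFDerivAt φ φ' x) (hh : ConvexOn ℝ W h) :
    h x - h u ≤ φ' (u - x) := by
  set k : ℝ → ℝ := fun s ↦ φ (x + s • (u - x)) + s * (h u - h x)
  -- by convexity of `h`, `k s ≥ (φ + h) (x + s • (u - x)) - h x`, with equality at `s = 0`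
  have hk_min : IsMinOn k (Icc 0 1) 0 := by
    rintro s ⟨hs0, hs1⟩
    have hseg : x + s • (u - x) = (1 - s) • x + s • u := by module
    have hconv : h (x + s • (u - x)) ≤ (1 - s) * h x + s * h u := by
      rw [hseg]; exact hh.2 hx hu (by linarith) hs0 (by ring)
    have := hmin (hW.add_smul_sub_mem hx hu ⟨hs0, hs1⟩)
    simp only [k, Pi.add_apply, zero_smul, add_zero, zero_mul, mem_ofPred_eq] at this ⊢
    nlinarith
  have hk_deriv : HasDerivAt k (φ' (u - x) + (h u - h x)) 0 := by
    have hline : HasDerivAt (fun s : ℝ ↦ x + s • (u - x)) (u - x) 0 := by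
      simpa using ((hasDerivAt_id (0 : ℝ)).smul_const (u - x)).const_add x
    have hφ0 : HasFDerivAt φ φ' (x + (0 : ℝ) • (u - x)) := by simpa using hφ
    have := (hφ0.comp_hasDerivAt 0 hline).add ((hasDerivAt_id' (0 : ℝ)).mul_const (h u - h x))
    rwa [one_mul] at this
  have hone : (1 : ℝ) ∈ posTangentConeAt (Icc 0 1) 0 :=
    mem_posTangentConeAt_of_segment_subset (by simp [segment_eq_Icc])
  have := hk_min.localize.hasFDerivWithinAt_nonneg hk_deriv.hasFDerivAt.hasFDerivWithinAt hone
  rw [ContinuousLinearMap.toSpanSingleton_apply, one_smul] at this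
  linarith

section Bregman

variable {E : Type*} [NormedAddCommGroup E] [InnerProductSpace ℝ E] [CompleteSpace E]

noncomputable def bregmanDiv (ψ : E → ℝ) (w v : E) : ℝ := ψ w - ψ v - ⟪gradient ψ v, w - v⟫

theorem bregmanDiv_three_point (ψ : E → ℝ) (w x u : E) :
    bregmanDiv ψ x w + bregmanDiv ψ u x - bregmanDiv ψ u w
      = ⟪gradient ψ w - gradient ψ x, u - x⟫ := by
  simp only [bregmanDiv, inner_sub_left, inner_sub_right]
  ring

theorem bregmanDiv_nonneg {ψ : E → ℝ} {N : E → ℝ} {α : ℝ} (hα : 0 < α) {x y : E}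
    (hsc : α / 2 * N (x - y) ^ 2 ≤ bregmanDiv ψ x y) : 0 ≤ bregmanDiv ψ x y :=
  le_trans (by positivity) hsc

theorem eq_of_bregmanDiv_nonpos {ψ : E → ℝ} {N : E → ℝ} {α : ℝ} (hα : 0 < α)
    (hN : ∀ z, N z = 0 → z = 0) {x y : E}
    (hsc : α / 2 * N (x - y) ^ 2 ≤ bregmanDiv ψ x y) (h : bregmanDiv ψ x y ≤ 0) : x = y := by
  have hsq : N (x - y) ^ 2 = 0 := by
    nlinarith [sq_nonneg (N (x - y))]
  exact sub_eq_zero.mp (hN _ (pow_eq_zero_iff two_ne_zero |>.mp hsq))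

def IsMirrorStep (ψ r : E → ℝ) (W : Set E) (η : ℝ) (g w x : E) : Prop :=
  x ∈ W ∧ IsMinOn (fun v ↦ η * ⟪g, v⟫ + bregmanDiv ψ v w + η * r v) W x

theorem IsMirrorStep.bregmanDiv_three_point_le {ψ r : E → ℝ} {W : Set E} {η : ℝ} {g w x u : E}
    (hstep : IsMirrorStep ψ r W η g w x) (hW : Convex ℝ W) (hu : u ∈ W)
    (hψ : DifferentiableAt ℝ ψ x) (hr : ConvexOn ℝ W r) (hη : 0 ≤ η) :
    bregmanDiv ψ x w + bregmanDiv ψ u x - bregmanDiv ψ u w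
      ≤ η * ⟪g, u - x⟫ + η * (r u - r x) := by
  set h : E → ℝ := fun v ↦ η * r v + ⟪η • g - gradient ψ w, v⟫
  have hh : ConvexOn ℝ W h :=
    (hr.smul hη).add ((innerSL ℝ (η • g - gradient ψ w)).toLinearMap.convexOn hW)
  -- the objective of the step is `ψ + h` up to an additive constant
  have hmin : IsMinOn (ψ + h) W x := by
    intro v hv
    have := hstep.2 hv
    simp only [mem_ofPred_eq, Pi.add_apply, h, bregmanDiv, inner_sub_left, inner_sub_right,
      inner_smul_left, RCLike.conj_to_real] at this ⊢
    linarith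
  have hopt := hmin.sub_le_of_hasFDerivAt_of_convexOn hW hstep.1 hu
    hψ.hasGradientAt.hasFDerivAt hh
  rw [bregmanDiv_three_point]
  simp only [h, InnerProductSpace.toDual_apply_apply, inner_sub_left, inner_sub_right,
    inner_smul_left, RCLike.conj_to_real] at hopt ⊢
  linarith

theorem IsMirrorStep.regret_le {ψ r : E → ℝ} {N : Seminorm ℝ E} {W : Set E} {α G η : ℝ}
    {g w x u : E} (hstep : IsMirrorStep ψ r W η g w x) (hW : Convex ℝ W) (hu : u ∈ W)
    (hψ : DifferentiableAt ℝ ψ x) (hr : ConvexOn ℝ W r) (hη : 0 ≤ η) (hα : 0 < α)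
    (hsc : α / 2 * N (x - w) ^ 2 ≤ bregmanDiv ψ x w) (hdual : ⟪g, w - x⟫ ≤ G * N (w - x)) :
    η * (⟪g, w - u⟫ + r x - r u) + bregmanDiv ψ u x
      ≤ η ^ 2 * G ^ 2 / (2 * α) + bregmanDiv ψ u w := by
  have hopt := hstep.bregmanDiv_three_point_le hW hu hψ hr hη
  set s := N (w - x)
  have hsc' : α / 2 * s ^ 2 ≤ bregmanDiv ψ x w := by
    rwa [← map_neg_eq_map, neg_sub] at hsc
  -- the strong-convexity term absorbs the movement of the iterate (AM–GM)
  have hamgm : η * (G * s) - α / 2 * s ^ 2 ≤ η ^ 2 * G ^ 2 / (2 * α) := by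
    rw [le_div_iff₀ (by positivity)]
    nlinarith [sq_nonneg (α * s - η * G)]
  have hmove : η * ⟪g, w - x⟫ ≤ η * (G * s) := mul_le_mul_of_nonneg_left hdual hη
  have hsplit : ⟪g, u - x⟫ = ⟪g, w - x⟫ - ⟪g, w - u⟫ := by
    simp only [inner_sub_right]; ring
  rw [hsplit] at hopt
  nlinarith

theorem IsMirrorStep.sum_regret_le {ψ r : E → ℝ} {N : Seminorm ℝ E} {W : Set E} {α G η : ℝ}
    {g w : ℕ → E} {u : E} {T : ℕ} (hW : Convex ℝ W) (hu : u ∈ W) (hψ : Differentiable ℝ ψ)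
    (hr : ConvexOn ℝ W r) (hη : 0 ≤ η) (hα : 0 < α)
    (hsc : ∀ x y, α / 2 * N (x - y) ^ 2 ≤ bregmanDiv ψ x y) (hdual : ∀ t y, ⟪g t, y⟫ ≤ G * N y)
    (hstep : ∀ t < T, IsMirrorStep ψ r W η (g t) (w t) (w (t + 1))) :
    η * ∑ t ∈ range T, (⟪g t, w t - u⟫ + r (w (t + 1)) - r u) + bregmanDiv ψ u (w T)
      ≤ T * (η ^ 2 * G ^ 2 / (2 * α)) + bregmanDiv ψ u (w 0) := by
  induction T with
  | zero => simp
  | succ T ih =>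
    have hlast := (hstep T T.lt_succ_self).regret_le hW hu (hψ _) hr hη hα (hsc _ _) (hdual _ _)
    have hprev := ih fun t ht ↦ hstep t (ht.trans T.lt_succ_self)
    rw [sum_range_succ, mul_add]
    push_cast
    linarith

end Bregman

theorem sum_regret_le_sum_linearized {E : Type*} [NormedAddCommGroup E] [InnerProductSpace ℝ E]
    {f : ℕ → E → ℝ} {r : E → ℝ} {w g : ℕ → E} {u : E} {T : ℕ}
    (hsub : ∀ t, f t (w t) + ⟪g t, u - w t⟫ ≤ f t u) (hr : r (w 0) ≤ r (w T)) :
    ∑ t ∈ range T, (f t (w t) + r (w t) - f t u - r u)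
      ≤ ∑ t ∈ range T, (⟪g t, w t - u⟫ + r (w (t + 1)) - r u) := by
  have hlin : ∀ t ∈ range T, f t (w t) + r (w t) - f t u - r u
      ≤ ⟪g t, w t - u⟫ + r (w (t + 1)) - r u + (r (w t) - r (w (t + 1))) := by
    intro t _
    have := hsub t
    rw [← neg_sub, inner_neg_right] at this
    linarith
  calc _ ≤ ∑ t ∈ range T,
          (⟪g t, w t - u⟫ + r (w (t + 1)) - r u + (r (w t) - r (w (t + 1)))) := sum_le_sum hlin
    _ = ∑ t ∈ range T, (⟪g t, w t - u⟫ + r (w (t + 1)) - r u) + (r (w 0) - r (w T)) := by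
      rw [sum_add_distrib, sum_range_sub' (fun t ↦ r (w t))]
    _ ≤ _ := by linarith

theorem step_size_tradeoff {α G B T η : ℝ} (hα : 0 < α) (hG : 0 < G) (hB : 0 ≤ B) (hT : 0 < T)
    (hη : η = √(2 * α * B) / (G * √T)) :
    T * (η ^ 2 * G ^ 2 / (2 * α)) + B = η * (√(2 * T * B) * G / √α) := by
  have hαB : √(2 * α * B) = √α * √(2 * B) := by
    rw [← Real.sqrt_mul hα.le]; ring_nf
  have hTB : √(2 * T * B) = √T * √(2 * B) := by
    rw [← Real.sqrt_mul hT.le]; ring_nf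
  have hsα := Real.sq_sqrt hα.le
  have hsT := Real.sq_sqrt hT.le
  have hsB := Real.sq_sqrt (by positivity : 0 ≤ 2 * B)
  have hα' : 0 < √α := Real.sqrt_pos.mpr hα
  have hT' : 0 < √T := Real.sqrt_pos.mpr hT
  subst hη
  rw [hαB, hTB]
  field_simp
  rw [hsα, hsT, hsB]
  ring

theorem mirror_descent_regret_general (n : ℕ) (T : ℕ) (hT : 1 ≤ T)
    (ψ r : EuclideanSpace ℝ (Fin n) → ℝ)
    (f : ℕ → EuclideanSpace ℝ (Fin n) → ℝ)
    (N : Seminorm ℝ (EuclideanSpace ℝ (Fin n))) (hNdef : ∀ x, N x = 0 → x = 0)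
    (W : Set (EuclideanSpace ℝ (Fin n))) (hW : Convex ℝ W)
    (α G : ℝ) (hα : 0 < α) (hG : 0 < G)
    (ψdiff : Differentiable ℝ ψ)
    (B : EuclideanSpace ℝ (Fin n) → EuclideanSpace ℝ (Fin n) → ℝ)
    (hB : ∀ w v, B w v = ψ w - ψ v - ⟪gradient ψ v, w - v⟫)
    (hψsc : ∀ w v, B w v ≥ (α/2) * N (w - v)^2)
    (hr : ConvexOn ℝ Set.univ r)
    (w : ℕ → EuclideanSpace ℝ (Fin n)) (g : ℕ → EuclideanSpace ℝ (Fin n))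
    (wstar : EuclideanSpace ℝ (Fin n)) (hwstar : wstar ∈ W)
    (η : ℝ) (hη : η = Real.sqrt (2 * α * B wstar (w 0)) / (G * Real.sqrt T))
    (hr0 : ∀ u, r (w 0) ≤ r u)
    (hsub : ∀ t u, f t u ≥ f t (w t) + ⟪g t, u - w t⟫)
    (hdual : ∀ t u, ⟪g t, u⟫ ≤ G * N u)
    (hupd : ∀ t < T, w (t+1) ∈ W ∧ ∀ u ∈ W,
      η * ⟪g t, w (t+1)⟫ + B (w (t+1)) (w t) + η * r (w (t+1))
        ≤ η * ⟪g t, u⟫ + B u (w t) + η * r u) :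
    ∑ t ∈ Finset.range T, (f t (w t) + r (w t) - f t wstar - r wstar)
      ≤ Real.sqrt (2 * T * B wstar (w 0)) * G / Real.sqrt α := by
  obtain rfl : B = bregmanDiv ψ := funext₂ hB
  have hη0 : 0 ≤ η := hη ▸ by positivity
  have htel : ∀ k ≤ T, η * ∑ t ∈ range k, (⟪g t, w t - wstar⟫ + r (w (t + 1)) - r wstar)
      + bregmanDiv ψ wstar (w k) ≤ k * (η ^ 2 * G ^ 2 / (2 * α)) + bregmanDiv ψ wstar (w 0) :=
    fun k hk ↦ IsMirrorStep.sum_regret_le hW hwstar ψdiff (hr.subset (subset_univ W) hW) hη0 hα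
      hψsc hdual fun t ht ↦ hupd t (ht.trans_le hk)
  rcases (bregmanDiv_nonneg hα (hψsc wstar (w 0))).eq_or_lt with hB0 | hB0
  · -- then `η = 0`, so the divergence to `wstar` never grows and the iterates stay at `wstar`
    have hfix : ∀ t ≤ T, w t = wstar := fun t ht ↦ (eq_of_bregmanDiv_nonpos hα hNdef (hψsc _ _)
      (by simpa [hη, ← hB0] using htel t ht)).symm
    rw [← hB0, sum_eq_zero fun t ht ↦ by simp [hfix t (mem_range.1 ht).le]]
    simp
  · have hηpos : 0 < η := hη ▸ by positivity
    refine le_of_mul_le_mul_left ?_ hηpos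
    rw [← step_size_tradeoff hα hG hB0.le (by exact_mod_cast hT) hη]
    have hlin := sum_regret_le_sum_linearized (fun t ↦ hsub t wstar) (hr0 (w T))
    linarith [mul_le_mul_of_nonneg_left hlin hη0, htel T le_rfl,
      bregmanDiv_nonneg hα (hψsc wstar (w T))]

/-- Mirror descent regret bound, convex case (Theorem 1 of Trial 1): with step
size η = √(2α B_ψ(w*,w₁))/(G√T), the regularized regret is at most
√(2T·B_ψ(w*,w₁))·G/√α.  Samples are indexed `t = 0, …, T-1` with `w 0 = w₁`. -/
theorem mirror_descent_regret (n : ℕ) (T : ℕ) (hT : 1 ≤ T)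
    (ψ r : EuclideanSpace ℝ (Fin n) → ℝ)
    (f : ℕ → EuclideanSpace ℝ (Fin n) → ℝ)
    (N : Seminorm ℝ (EuclideanSpace ℝ (Fin n))) (hNdef : ∀ x, N x = 0 → x = 0)
    (W : Set (EuclideanSpace ℝ (Fin n))) (hW : Convex ℝ W) (hWc : IsClosed W)
    (α G : ℝ) (hα : 0 < α) (hG : 0 < G)
    (ψdiff : Differentiable ℝ ψ)
    (B : EuclideanSpace ℝ (Fin n) → EuclideanSpace ℝ (Fin n) → ℝ)
    (hB : ∀ w v, B w v = ψ w - ψ v - ⟪gradient ψ v, w - v⟫)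
    (hψsc : ∀ w v, B w v ≥ (α/2) * N (w - v)^2)
    (hf : ∀ t, ConvexOn ℝ Set.univ (f t)) (hr : ConvexOn ℝ Set.univ r)
    (w : ℕ → EuclideanSpace ℝ (Fin n)) (g : ℕ → EuclideanSpace ℝ (Fin n))
    (wstar : EuclideanSpace ℝ (Fin n)) (hwstar : wstar ∈ W)
    (η : ℝ) (hη : η = Real.sqrt (2 * α * B wstar (w 0)) / (G * Real.sqrt T))
    (hw0 : w 0 ∈ W) (hr0 : ∀ u, r (w 0) ≤ r u)
    (hsub : ∀ t u, f t u ≥ f t (w t) + ⟪g t, u - w t⟫)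
    (hdual : ∀ t u, ⟪g t, u⟫ ≤ G * N u)
    (hupd : ∀ t < T, w (t+1) ∈ W ∧ ∀ u ∈ W,
      η * ⟪g t, w (t+1)⟫ + B (w (t+1)) (w t) + η * r (w (t+1))
        ≤ η * ⟪g t, u⟫ + B u (w t) + η * r u) :
    ∑ t ∈ Finset.range T, (f t (w t) + r (w t) - f t wstar - r wstar)
      ≤ Real.sqrt (2 * T * B wstar (w 0)) * G / Real.sqrt α :=
  mirror_descent_regret_general n T hT ψ r f N hNdef W hW α G hα hG ψdiff B hB hψsc hr w g wstar
    hwstar η hη hr0 hsub hdual hupd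
end

section
/- (Online gradient descent regret, strongly convex case) Let F_t = f_t + r with r λ-strongly convex w.r.t. the Euclidean norm and each F_t convex with subgradients g_t at w_t satisfying ‖g_t‖ ≤ G. With updates w_{t+1} = Π_W(w_t − (1/(λt)) g_t) (Euclidean projection onto convex closed W), the regret satisfies Σ_{t=1}^T [F_t(w_t) − F_t(w*)] ≤ (G²/(2λ))(1 + log T) for any w* ∈ W. -/
/-!
Strong convexity gives `F t (w t) - F t u ≤ ⟪g t, w t - u⟫ - (λ/2)‖w t - u‖²`, and since projecting
onto a convex set does not move a point away from `u ∈ W`, the gradient step gives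
`⟪g t, w t - u⟫ ≤ (λt/2)(‖w t - u‖² - ‖w (t+1) - u‖²) + ‖g t‖²/(2λt)`. With the step size `1/(λt)`
the distance terms combine into `(λ/2)(Φ t - Φ (t+1))` for the potential `Φ t = (t-1)‖w t - u‖²`,
which telescopes to `-(λ/2) T ‖w (T+1) - u‖² ≤ 0`. What remains is `G²/(2λ)` times the harmonic
number `H_T ≤ 1 + log T`.
-/

open RealInnerProductSpace

section

variable {E : Type*} [NormedAddCommGroup E] [InnerProductSpace ℝ E]

theorem norm_sub_le_of_isMinOn_norm_sub {K : Set E} (hK : Convex ℝ K) {p y q : E} (hp : p ∈ K)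
    (hq : q ∈ K) (hmin : IsMinOn (fun u => ‖u - y‖) K p) : ‖p - q‖ ≤ ‖y - q‖ := by
  have hinf : ‖y - p‖ = ⨅ u : K, ‖y - u‖ := by
    refine le_antisymm ?_ (ciInf_le ⟨0, Set.forall_mem_range.2 fun _ => norm_nonneg _⟩ (⟨p, hp⟩ : K))
    have : Nonempty K := ⟨⟨p, hp⟩⟩
    refine le_ciInf fun u => ?_
    rw [norm_sub_rev, norm_sub_rev y]
    exact isMinOn_iff.mp hmin u u.2
  have hobtuse : ⟪y - p, q - p⟫ ≤ 0 := (norm_eq_iInf_iff_real_inner_le_zero hK hp).mp hinf q hq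
  have hexpand : ‖y - q‖ ^ 2 = ‖y - p‖ ^ 2 - 2 * ⟪y - p, q - p⟫ + ‖p - q‖ ^ 2 := by
    rw [show y - q = (y - p) - (q - p) by abel, norm_sub_sq_real, norm_sub_rev q p]
  refine (sq_le_sq₀ (norm_nonneg _) (norm_nonneg _)).mp ?_
  nlinarith [sq_nonneg ‖y - p‖]

theorem two_mul_inner_le_of_norm_sub_le_gradient_step {w w' g u : E} {η : ℝ}
    (hstep : ‖w' - u‖ ≤ ‖w - η • g - u‖) :
    2 * η * ⟪g, w - u⟫ ≤ ‖w - u‖ ^ 2 - ‖w' - u‖ ^ 2 + η ^ 2 * ‖g‖ ^ 2 := by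
  have hexpand : ‖w - η • g - u‖ ^ 2 = ‖w - u‖ ^ 2 - 2 * η * ⟪g, w - u⟫ + η ^ 2 * ‖g‖ ^ 2 := by
    rw [show w - η • g - u = (w - u) - η • g by abel, norm_sub_sq_real, real_inner_smul_right,
      norm_smul, real_inner_comm, mul_pow, Real.norm_eq_abs, sq_abs]
    ring
  have := pow_le_pow_left₀ (norm_nonneg _) hstep 2
  linarith

theorem sub_le_of_strongly_convex_gradient_step {f : E → ℝ} {w w' g u : E} {lam t G : ℝ}
    (hlam : 0 < lam) (ht : 0 < t) (hg : ‖g‖ ≤ G)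
    (hsc : f u ≥ f w + ⟪g, u - w⟫ + lam / 2 * ‖u - w‖ ^ 2)
    (hstep : ‖w' - u‖ ≤ ‖w - (1 / (lam * t)) • g - u‖) :
    f w - f u ≤ lam / 2 * ((t - 1) * ‖w - u‖ ^ 2 - t * ‖w' - u‖ ^ 2) + G ^ 2 / (2 * lam) * (1 / t) := by
  set η := 1 / (lam * t) with hη
  have hdescent := two_mul_inner_le_of_norm_sub_le_gradient_step hstep
  have hg2 : ‖g‖ ^ 2 ≤ G ^ 2 := pow_le_pow_left₀ (norm_nonneg _) hg 2
  have hηpos : 0 < η := by positivity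
  have hη_inv : lam * t * η = 1 := by rw [hη]; field_simp
  have hinner : ⟪g, w - u⟫ ≤ lam * t / 2 * (‖w - u‖ ^ 2 - ‖w' - u‖ ^ 2) + η / 2 * G ^ 2 := by
    nlinarith [mul_le_mul_of_nonneg_left hdescent (by positivity : 0 ≤ lam * t / 2),
      mul_le_mul_of_nonneg_left hg2 hηpos.le]
  have hη_split : η / 2 * G ^ 2 = G ^ 2 / (2 * lam) * (1 / t) := by rw [hη]; ring
  rw [← neg_sub w u, inner_neg_right, norm_neg] at hsc
  linarith

end

theorem sum_Icc_sub_succ {M : Type*} [AddCommGroup M] (f : ℕ → M) (T : ℕ) :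
    ∑ t ∈ Finset.Icc 1 T, (f t - f (t + 1)) = f 1 - f (T + 1) := by
  rw [← Finset.Ico_add_one_right_eq_Icc, ← neg_sub, ← Finset.sum_Ico_sub f (Nat.le_add_left 1 T),
    ← Finset.sum_neg_distrib]
  simp only [neg_sub]

theorem sum_Icc_one_div_le_one_add_log (T : ℕ) :
    ∑ t ∈ Finset.Icc 1 T, (1 : ℝ) / t ≤ 1 + Real.log T := by
  simpa [harmonic_eq_sum_Icc] using harmonic_le_one_add_log T

theorem ogd_strongly_convex_regret_general (n : ℕ) (T : ℕ)
    (F : ℕ → EuclideanSpace ℝ (Fin n) → ℝ)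
    (W : Set (EuclideanSpace ℝ (Fin n))) (hW : Convex ℝ W)
    (lam G : ℝ) (hlam : 0 < lam)
    (w g : ℕ → EuclideanSpace ℝ (Fin n))
    (hmem : ∀ t, 1 ≤ t → t ≤ T + 1 → w t ∈ W)
    (hgbound : ∀ t, 1 ≤ t → t ≤ T → ‖g t‖ ≤ G)
    (hsc : ∀ t, 1 ≤ t → t ≤ T → ∀ u,
      F t u ≥ F t (w t) + ⟪g t, u - w t⟫ + (lam/2) * ‖u - w t‖^2)
    (hproj : ∀ t, 1 ≤ t → t ≤ T → ∀ u ∈ W,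
      ‖w (t+1) - (w t - (1/(lam * t)) • g t)‖ ≤ ‖u - (w t - (1/(lam * t)) • g t)‖) :
    ∀ wstar ∈ W,
      ∑ t ∈ Finset.Icc 1 T, (F t (w t) - F t wstar)
        ≤ G^2 / (2 * lam) * (1 + Real.log T) := by
  intro wstar hstar
  set Φ : ℕ → ℝ := fun t => ((t : ℝ) - 1) * ‖w t - wstar‖ ^ 2
  have hstep : ∀ t ∈ Finset.Icc 1 T,
      F t (w t) - F t wstar ≤ lam / 2 * (Φ t - Φ (t + 1)) + G ^ 2 / (2 * lam) * (1 / (t : ℝ)) := by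
    intro t ht
    obtain ⟨ht1, htT⟩ := Finset.mem_Icc.mp ht
    have hnear := norm_sub_le_of_isMinOn_norm_sub hW (hmem (t + 1) (by omega) (by omega)) hstar
      (isMinOn_iff.mpr (hproj t ht1 htT))
    convert sub_le_of_strongly_convex_gradient_step hlam (by positivity) (hgbound t ht1 htT)
      (hsc t ht1 htT wstar) hnear using 3
    push_cast [Φ]
    ring
  have hΦ : Φ 1 - Φ (T + 1) ≤ 0 := by
    simp only [Φ]
    push_cast
    simp only [sub_self, zero_mul, add_sub_cancel_right, zero_sub, neg_nonpos]
    positivity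
  calc ∑ t ∈ Finset.Icc 1 T, (F t (w t) - F t wstar)
      ≤ ∑ t ∈ Finset.Icc 1 T, (lam / 2 * (Φ t - Φ (t + 1)) + G ^ 2 / (2 * lam) * (1 / (t : ℝ))) :=
        Finset.sum_le_sum hstep
    _ = lam / 2 * (Φ 1 - Φ (T + 1)) + G ^ 2 / (2 * lam) * ∑ t ∈ Finset.Icc 1 T, (1 : ℝ) / t := by
        rw [Finset.sum_add_distrib, ← Finset.mul_sum, ← Finset.mul_sum, sum_Icc_sub_succ]
    _ ≤ G ^ 2 / (2 * lam) * (1 + Real.log T) := by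
        have hpotential := mul_nonpos_of_nonneg_of_nonpos (by positivity : 0 ≤ lam / 2) hΦ
        have hharmonic := mul_le_mul_of_nonneg_left (sum_Icc_one_div_le_one_add_log T)
          (by positivity : 0 ≤ G ^ 2 / (2 * lam))
        linarith

/-- Online gradient descent regret, strongly convex case: with step sizes
1/(λt) and Euclidean projection onto W, the regret of λ-strongly convex
objectives F_t = f_t + r with subgradients bounded by G is at most
(G²/(2λ))(1 + log T).  Steps are indexed t = 1, …, T. -/
theorem ogd_strongly_convex_regret (n : ℕ) (T : ℕ) (hT : 1 ≤ T)
    (F : ℕ → EuclideanSpace ℝ (Fin n) → ℝ)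
    (W : Set (EuclideanSpace ℝ (Fin n))) (hW : Convex ℝ W) (hWc : IsClosed W)
    (lam G : ℝ) (hlam : 0 < lam) (hG : 0 ≤ G)
    (w g : ℕ → EuclideanSpace ℝ (Fin n))
    (hmem : ∀ t, 1 ≤ t → t ≤ T + 1 → w t ∈ W)
    (hgbound : ∀ t, 1 ≤ t → t ≤ T → ‖g t‖ ≤ G)
    (hsc : ∀ t, 1 ≤ t → t ≤ T → ∀ u,
      F t u ≥ F t (w t) + ⟪g t, u - w t⟫ + (lam/2) * ‖u - w t‖^2)
    (hproj : ∀ t, 1 ≤ t → t ≤ T → ∀ u ∈ W,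
      ‖w (t+1) - (w t - (1/(lam * t)) • g t)‖ ≤ ‖u - (w t - (1/(lam * t)) • g t)‖) :
    ∀ wstar ∈ W,
      ∑ t ∈ Finset.Icc 1 T, (F t (w t) - F t wstar)
        ≤ G^2 / (2 * lam) * (1 + Real.log T) :=
  ogd_strongly_convex_regret_general n T F W hW lam G hlam w g hmem hgbound hsc hproj
end
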